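/- Let A ∈ ℝ^{n×n}, B ∈ ℝ^{n×p}, F ∈ ℝ^{r×n} with rank(F) = r, t₁ > 0, and let 𝒞 be the controllability matrix of (A, B). Then the following are equivalent: (i) for every z* ∈ ℝ^r there exists a continuous control u : [0, t₁] → ℝ^p such that F·∫₀^{t₁} exp(A(t₁−s))·B·u(s) ds = z* (i.e., every target state z* is reachable from x(0) = 0 in time t₁); (ii) rank(F·𝒞) = r. -/

import Mathlib

open Matrix intervalIntegral
/-- Controllability matrix of the pair `(A, B)`: the horizontal block concatenation of
`B, A*B, A²*B, …, A^(n-1)*B`, indexed so that entry `(i, (k, j))` is `(A^k * B) i j`. -/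
noncomputable def ctrbMat {n p : ℕ} (A : Matrix (Fin n) (Fin n) ℝ)
    (B : Matrix (Fin n) (Fin p) ℝ) : Matrix (Fin n) (Fin n × Fin p) ℝ :=
  fun i kj => (A ^ (kj.1 : ℕ) * B) i kj.2

/-- Controllability Gramian `W_c(t₁) = ∫₀^{t₁} exp(As) B Bᵀ exp(Aᵀs) ds` (entrywise integral). -/
noncomputable def ctrbGram {n p : ℕ} (A : Matrix (Fin n) (Fin n) ℝ)
    (B : Matrix (Fin n) (Fin p) ℝ) (t₁ : ℝ) : Matrix (Fin n) (Fin n) ℝ :=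
  fun i j => ∫ s in (0:ℝ)..t₁,
    (NormedSpace.exp (s • A) * B * Bᵀ * NormedSpace.exp (s • Aᵀ)) i j

/-!
Reachable outputs form the range of the linear map `u ↦ F x(t₁)`, which is onto iff no `w ≠ 0`
is orthogonal to it. With `c = Fᵀ w`, orthogonality means `cᵀ exp(sA) B = 0` for `s ∈ (0, t₁)`.
Indeed, if `cᵀ A^k B = 0` for all `k` this holds because `exp(sA)` lies in the (closed) span of
the powers of `A`; conversely the control `u(s) = Bᵀ exp((t₁ - s)Aᵀ) c` pairs with `w` to
`∫ ‖cᵀ exp((t₁ - s)A) B‖²`, and repeated differentiation of `cᵀ exp(sA) B = 0` on an interval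
gives `cᵀ A^k B = 0` for all `k`. By Cayley–Hamilton the latter says `wᵀ F 𝒞 = 0`, so the
orthogonality condition is injectivity of `w ↦ wᵀ F 𝒞`, i.e. `rank (F 𝒞) = r`.
-/

open NormedSpace Set

theorem LinearMap.surjective_iff_forall_dotProduct_eq_zero {K M ι : Type*} [Field K]
    [AddCommGroup M] [Module K M] [Fintype ι] [DecidableEq ι] (L : M →ₗ[K] ι → K) :
    Function.Surjective L ↔ ∀ w : ι → K, (∀ x, w ⬝ᵥ L x = 0) → w = 0 := by
  refine ⟨fun hL w hw => funext fun i => ?_, fun h => ?_⟩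
  · obtain ⟨x, hx⟩ := hL (Pi.single i 1)
    simpa [hx] using hw x
  by_contra hL
  obtain ⟨φ, hφ, hrange⟩ :=
    (range L).exists_le_ker_of_lt_top (lt_top_iff_ne_top.2 (range_eq_top.not.2 hL))
  set w : ι → K := fun i => φ fun j => if i = j then 1 else 0
  have hφw : ∀ v, φ v = w ⬝ᵥ v := fun v => by
    simp [pi_apply_eq_sum_univ φ v, dotProduct, w, mul_comm]
  have hw : w = 0 := h w fun x => (hφw _).symm.trans (hrange ⟨x, rfl⟩)
  exact hφ (LinearMap.ext fun v => by simp [hφw, hw])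

namespace Matrix

variable {R l m p : Type*} [Fintype m] [Fintype l]

def vecMulMulLinear [CommSemiring R] (c : m → R) (D : Matrix l p R) :
    Matrix m l R →ₗ[R] p → R where
  toFun M := c ᵥ* (M * D)
  map_add' M N := by rw [Matrix.add_mul, vecMul_add]
  map_smul' a M := by rw [Matrix.smul_mul, vecMul_smul]; rfl

@[simp]
theorem vecMulMulLinear_apply [CommSemiring R] (c : m → R) (D : Matrix l p R)
    (M : Matrix m l R) : vecMulMulLinear c D M = c ᵥ* (M * D) := rfl

theorem rank_eq_card_iff_vecMul_eq_zero {ι K : Type*} [Fintype ι] [Field K]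
    (M : Matrix m ι K) : M.rank = Fintype.card m ↔ ∀ w : m → K, w ᵥ* M = 0 → w = 0 := by
  rw [rank_eq_finrank_span_row, ← Set.finrank, eq_comm,
    ← linearIndependent_iff_card_eq_finrank_span, Fintype.linearIndependent_iff]
  simp only [vecMul_eq_sum, funext_iff, Pi.zero_apply]
  rfl

theorem pow_mem_span_pow_lt {n : ℕ} [CommRing R] [Nontrivial R] (A : Matrix (Fin n) (Fin n) R)
    (j : ℕ) : A ^ j ∈ Submodule.span R (range fun k : Fin n => A ^ (k : ℕ)) := by
  rw [pow_eq_aeval_mod_charpoly]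
  set q := Polynomial.X ^ j %ₘ A.charpoly
  rcases eq_or_ne q 0 with hq | hq
  · rw [hq, map_zero]
    exact zero_mem _
  have hdeg : q.natDegree < n := by
    have h := Polynomial.degree_modByMonic_lt (Polynomial.X ^ j) A.charpoly_monic
    rwa [Polynomial.degree_eq_natDegree hq, charpoly_degree_eq_dim, Fintype.card_fin,
      Nat.cast_lt] at h
  rw [Polynomial.aeval_eq_sum_range' hdeg]
  exact Submodule.sum_mem _ fun k hk => Submodule.smul_mem _ _
    (Submodule.subset_span ⟨⟨k, Finset.mem_range.mp hk⟩, rfl⟩)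

variable [DecidableEq m]

theorem continuous_exp_smul (A : Matrix m m ℝ) : Continuous fun s : ℝ => exp (s • A) := by
  let : NormedRing (Matrix m m ℝ) := Matrix.linftyOpNormedRing
  let : NormedAlgebra ℝ (Matrix m m ℝ) := Matrix.linftyOpNormedAlgebra
  let : NormedAlgebra ℚ (Matrix m m ℝ) := NormedAlgebra.restrictScalars ℚ ℝ _
  exact exp_continuous.comp (continuous_id.smul continuous_const)

theorem exp_smul_mem_span_pow (A : Matrix m m ℝ) (s : ℝ) :
    exp (s • A) ∈ Submodule.span ℝ (range (A ^ · : ℕ → Matrix m m ℝ)) := by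
  let : NormedRing (Matrix m m ℝ) := Matrix.linftyOpNormedRing
  let : NormedAlgebra ℝ (Matrix m m ℝ) := Matrix.linftyOpNormedAlgebra
  refine (Submodule.closed_of_finiteDimensional _).mem_of_tendsto
    (exp_series_hasSum_exp' (𝕂 := ℝ) (s • A)).tendsto_sum_nat (.of_forall fun N => ?_)
  exact Submodule.sum_mem _ fun k _ => Submodule.smul_mem _ _ <| by
    rw [smul_pow]
    exact Submodule.smul_mem _ _ (Submodule.subset_span ⟨k, rfl⟩)

theorem hasDerivAt_vecMul_exp_smul_mul [Fintype p] (A : Matrix m m ℝ) (c : m → ℝ)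
    (D : Matrix m p ℝ) (t : ℝ) :
    HasDerivAt (fun s : ℝ => c ᵥ* (exp (s • A) * D)) (c ᵥ* (exp (t • A) * (A * D))) t := by
  let : NormedRing (Matrix m m ℝ) := Matrix.linftyOpNormedRing
  let : NormedAlgebra ℝ (Matrix m m ℝ) := Matrix.linftyOpNormedAlgebra
  rw [← Matrix.mul_assoc]
  exact (vecMulMulLinear c D).toContinuousLinearMap.hasFDerivAt.comp_hasDerivAt t
    (hasDerivAt_exp_smul_const A t)

end Matrix

section Controllability

variable {n p : ℕ} {A : Matrix (Fin n) (Fin n) ℝ} {B : Matrix (Fin n) (Fin p) ℝ} {c : Fin n → ℝ}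

theorem vecMul_ctrbMat_eq_zero_iff : c ᵥ* ctrbMat A B = 0 ↔ ∀ k, c ᵥ* (A ^ k * B) = 0 := by
  have hblock : ∀ k : Fin n, (c ᵥ* ctrbMat A B) ∘ (k, ·) = c ᵥ* (A ^ (k : ℕ) * B) := fun k => by
    ext j
    simp [ctrbMat, vecMul, dotProduct]
  refine ⟨fun h j => ?_, fun h => funext fun ⟨k, j⟩ => congrFun (hblock k ▸ h k) j⟩
  have hspan : Submodule.span ℝ (range fun k : Fin n => A ^ (k : ℕ)) ≤
      LinearMap.ker (vecMulMulLinear c B) :=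
    Submodule.span_le.2 <| range_subset_iff.2 fun k => by simp [← hblock, h]
  exact hspan (pow_mem_span_pow_lt A j)

theorem vecMul_exp_smul_mul_eq_zero (h : ∀ k, c ᵥ* (A ^ k * B) = 0) (s : ℝ) :
    c ᵥ* (exp (s • A) * B) = 0 :=
  Submodule.span_le (p := LinearMap.ker (vecMulMulLinear c B)) |>.2
    (range_subset_iff.2 h) (exp_smul_mem_span_pow A s)

theorem vecMul_exp_smul_mul_mul_eq_zero {D : Matrix (Fin n) (Fin p) ℝ} {U : Set ℝ}
    (hU : IsOpen U) (h : ∀ s ∈ U, c ᵥ* (exp (s • A) * D) = 0) :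
    ∀ s ∈ U, c ᵥ* (exp (s • A) * (A * D)) = 0 :=
  fun s hs => (hasDerivAt_vecMul_exp_smul_mul A c D s).unique <|
    (hasDerivAt_const s 0).congr_of_eventuallyEq (Filter.eventually_of_mem (hU.mem_nhds hs) h)

theorem vecMul_pow_mul_eq_zero_of_forall_mem_Ioo {a b : ℝ} (hab : a < b)
    (h : ∀ s ∈ Ioo a b, c ᵥ* (exp (s • A) * B) = 0) (k : ℕ) : c ᵥ* (A ^ k * B) = 0 := by
  have hderiv : ∀ j, ∀ s ∈ Ioo a b, c ᵥ* (exp (s • A) * (A ^ j * B)) = 0 := by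
    intro j
    induction j with
    | zero => simpa using h
    | succ j ih =>
      simpa only [pow_succ', Matrix.mul_assoc] using vecMul_exp_smul_mul_mul_eq_zero isOpen_Ioo ih
  obtain ⟨σ, hσ⟩ := nonempty_Ioo.2 hab
  -- `c exp(σA)` annihilates every `A ^ m * (A ^ k * B)`, hence also `exp(-σA) * (A ^ k * B)`.
  have h' := vecMul_exp_smul_mul_eq_zero (c := c ᵥ* exp (σ • A)) (B := A ^ k * B)
    (fun m => by rw [← Matrix.mul_assoc, ← pow_add, vecMul_vecMul]; exact hderiv _ σ hσ) (-σ)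
  rwa [vecMul_vecMul, ← Matrix.mul_assoc,
    ← exp_add_of_commute _ _ ((Commute.refl A).smul_left _ |>.smul_right _), ← add_smul,
    add_neg_cancel, zero_smul, exp_zero, Matrix.one_mul] at h'

variable (A B) in
theorem continuous_exp_sub_smul_mul (t₁ : ℝ) : Continuous fun s => exp ((t₁ - s) • A) * B :=
  ((Matrix.continuous_exp_smul A).comp (continuous_sub_left t₁)).matrix_mul continuous_const

variable (A B) in
noncomputable def inputToState (t₁ : ℝ) : C(ℝ, Fin p → ℝ) →ₗ[ℝ] Fin n → ℝ where
  toFun u := ∫ s in (0 : ℝ)..t₁, (exp ((t₁ - s) • A) * B) *ᵥ u s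
  map_add' u v := by
    simp only [ContinuousMap.add_apply, mulVec_add]
    exact integral_add
      (((continuous_exp_sub_smul_mul A B t₁).matrix_mulVec u.2).intervalIntegrable _ _)
      (((continuous_exp_sub_smul_mul A B t₁).matrix_mulVec v.2).intervalIntegrable _ _)
  map_smul' a u := by
    simp only [ContinuousMap.smul_apply, mulVec_smul, integral_smul, RingHom.id_apply]

theorem inputToState_mk {t₁ : ℝ} {u : ℝ → Fin p → ℝ} (hu : Continuous u) :
    inputToState A B t₁ ⟨u, hu⟩ =
      fun i => ∫ s in (0 : ℝ)..t₁, ((exp ((t₁ - s) • A) * B) *ᵥ u s) i :=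
  funext fun i => ((ContinuousLinearMap.proj (R := ℝ) i).intervalIntegral_comp_comm
    (((continuous_exp_sub_smul_mul A B t₁).matrix_mulVec hu).intervalIntegrable _ _)).symm

theorem dotProduct_inputToState {t₁ : ℝ} (u : C(ℝ, Fin p → ℝ)) :
    c ⬝ᵥ inputToState A B t₁ u =
      ∫ s in (0 : ℝ)..t₁, (c ᵥ* (exp ((t₁ - s) • A) * B)) ⬝ᵥ u s := by
  simp_rw [← dotProduct_mulVec]
  exact ((dotProductBilin ℝ ℝ c).toContinuousLinearMap.intervalIntegral_comp_comm
    (((continuous_exp_sub_smul_mul A B t₁).matrix_mulVec u.2).intervalIntegrable _ _)).symm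

theorem forall_dotProduct_inputToState_eq_zero_iff {t₁ : ℝ} (ht₁ : 0 < t₁) :
    (∀ u, c ⬝ᵥ inputToState A B t₁ u = 0) ↔ c ᵥ* ctrbMat A B = 0 := by
  rw [vecMul_ctrbMat_eq_zero_iff]
  refine ⟨fun h => ?_, fun h u => by simp [dotProduct_inputToState, vecMul_exp_smul_mul_eq_zero h]⟩
  set g : ℝ → Fin p → ℝ := fun s => c ᵥ* (exp ((t₁ - s) • A) * B)
  have hg : Continuous g := continuous_const.matrix_vecMul (continuous_exp_sub_smul_mul A B t₁)
  have hg_sq : ∀ s, 0 ≤ g s ⬝ᵥ g s := fun s => Finset.sum_nonneg fun i _ => mul_self_nonneg _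
  have hint : ∫ s in (0 : ℝ)..t₁, g s ⬝ᵥ g s = 0 :=
    (dotProduct_inputToState ⟨g, hg⟩).symm.trans (h _)
  have hg_zero : ∀ s ∈ Icc 0 t₁, g s = 0 := fun s hs => by
    by_contra hne
    exact (integral_pos ht₁ (hg.dotProduct hg).continuousOn (fun s _ => hg_sq s)
      ⟨s, hs, (hg_sq s).lt_of_ne' (dotProduct_self_eq_zero.not.2 hne)⟩).ne' hint
  refine vecMul_pow_mul_eq_zero_of_forall_mem_Ioo ht₁ fun σ hσ => ?_
  simpa [g] using hg_zero (t₁ - σ) ⟨by linarith [hσ.2], by linarith [hσ.1]⟩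

end Controllability

theorem output_controllability_iff_target_reachable_general {n p r : ℕ}
    (A : Matrix (Fin n) (Fin n) ℝ) (B : Matrix (Fin n) (Fin p) ℝ)
    (F : Matrix (Fin r) (Fin n) ℝ) (t₁ : ℝ) (ht₁ : 0 < t₁) :
    (∀ z : Fin r → ℝ, ∃ u : ℝ → Fin p → ℝ, Continuous u ∧
        F.mulVec (fun i => ∫ s in (0:ℝ)..t₁,
          (NormedSpace.exp ((t₁ - s) • A) * B).mulVec (u s) i) = z) ↔
      (F * ctrbMat A B).rank = r := by
  trans Function.Surjective (F.mulVecLin ∘ₗ inputToState A B t₁)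
  · exact forall_congr' fun z =>
      ⟨fun ⟨u, hu, hz⟩ => ⟨⟨u, hu⟩, by simpa [inputToState_mk] using hz⟩,
        fun ⟨u, hz⟩ => ⟨u, u.continuous, by rw [← inputToState_mk u.continuous]; exact hz⟩⟩
  have hrank := Matrix.rank_eq_card_iff_vecMul_eq_zero (F * ctrbMat A B)
  rw [Fintype.card_fin] at hrank
  rw [LinearMap.surjective_iff_forall_dotProduct_eq_zero, hrank]
  refine forall_congr' fun w => imp_congr_left ?_
  simp only [LinearMap.comp_apply, mulVecLin_apply, dotProduct_mulVec, ← vecMul_vecMul]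
  exact forall_dotProduct_inputToState_eq_zero_iff ht₁

/-- **Output controllability rank condition.** Suppose `rank(F) = r`. Every target
state `z* ∈ ℝ^r` is reachable from `x(0) = 0` in time `t₁ > 0` by a continuous
control if and only if `rank(F·𝒞) = r`. -/
theorem output_controllability_iff_target_reachable {n p r : ℕ}
    (A : Matrix (Fin n) (Fin n) ℝ) (B : Matrix (Fin n) (Fin p) ℝ)
    (F : Matrix (Fin r) (Fin n) ℝ) (t₁ : ℝ) (ht₁ : 0 < t₁)
    (hF : F.rank = r) :
    (∀ z : Fin r → ℝ, ∃ u : ℝ → Fin p → ℝ, Continuous u ∧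
        F.mulVec (fun i => ∫ s in (0:ℝ)..t₁,
          (NormedSpace.exp ((t₁ - s) • A) * B).mulVec (u s) i) = z) ↔
      (F * ctrbMat A B).rank = r :=
  output_controllability_iff_target_reachable_general A B F t₁ ht₁
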